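/- arXiv:1609.05074 — 8 statements merged into one kernel-verified Lean document; each statement's English description precedes it below -/
import Mathlib

section
/- Let n ≥ 1. For every smooth compactly supported φ : ℝ → ℝ, ∫_ℝ φ'(r)² cosh(r)^n dr ≥ n ∫_ℝ φ(r)² cosh(r)^{n-2} dr. -/
open Real MeasureTheory Set

theorem stmt_4 (n : ℕ) (hn : 1 ≤ n) (φ : ℝ → ℝ) (hφ : ContDiff ℝ (⊤ : ℕ∞) φ)
    (hc : HasCompactSupport φ) :
    ∫ r : ℝ, (deriv φ r) ^ 2 * Real.cosh r ^ (n : ℤ)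
      ≥ (n : ℝ) * ∫ r : ℝ, (φ r) ^ 2 * Real.cosh r ^ ((n : ℤ) - 2) := by
  set m : ℕ := n - 1 with hm
  -- auxiliary function G and its derivative g'
  set G : ℝ → ℝ := fun r => (n : ℝ) * φ r ^ 2 * Real.sinh r * Real.cosh r ^ m with hG
  set g' : ℝ → ℝ := fun r => (n : ℝ) * (2 * φ r * deriv φ r * Real.sinh r * Real.cosh r ^ m
      + φ r ^ 2 * Real.cosh r * Real.cosh r ^ m
      + (m : ℝ) * φ r ^ 2 * Real.sinh r ^ 2 * Real.cosh r ^ (m - 1)) with hg'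
  have hφ' : Continuous (deriv φ) := hφ.continuous_deriv (by simp)
  have hφc : Continuous φ := hφ.continuous
  have hcne : ∀ r : ℝ, Real.cosh r ≠ 0 := fun r => (Real.cosh_pos r).ne'
  have hzc : ∀ k : ℤ, Continuous fun r : ℝ => Real.cosh r ^ k := fun k =>
    Real.continuous_cosh.zpow₀ k (fun a => Or.inl (hcne a))
  have hGd : ∀ r, HasDerivAt G (g' r) r := by
    intro r
    have h1 : HasDerivAt (fun r => φ r ^ 2) (2 * φ r * deriv φ r) r := by
      have h : HasDerivAt (fun y => φ y ^ 2) _ r := ((hφ.differentiable (by simp) r).hasDerivAt).pow 2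
      convert h using 1
      ring
    have h2 : HasDerivAt (fun r : ℝ => Real.sinh r * Real.cosh r ^ m)
        (Real.cosh r * Real.cosh r ^ m + Real.sinh r * ((m : ℝ) * Real.cosh r ^ (m - 1) * Real.sinh r)) r := by
      exact (Real.hasDerivAt_sinh r).mul ((Real.hasDerivAt_cosh r).pow m)
    have : HasDerivAt (fun y => (n : ℝ) * (φ y ^ 2 * (Real.sinh y * Real.cosh y ^ m))) _ r :=
      (h1.mul h2).const_mul (n : ℝ)
    convert this using 1
    · funext y
      rw [hG]
      ring
    · rw [hg']
      ring
  have hGsupp : HasCompactSupport G := by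
    apply HasCompactSupport.intro hc
    intro x hx
    simp [hG, image_eq_zero_of_notMem_tsupport hx]
  have hGcd : ContDiff ℝ 1 G := by
    have h : ContDiff ℝ (⊤ : ℕ∞) fun r : ℝ => (n : ℝ) * φ r ^ 2 * Real.sinh r * Real.cosh r ^ m :=
      ((contDiff_const.mul (hφ.pow 2)).mul Real.contDiff_sinh).mul (Real.contDiff_cosh.pow m)
    exact h.of_le (by simp)
  have hderivG : deriv G = g' := funext fun r => (hGd r).deriv
  -- compact support helpers
  have hsupp : ∀ (f : ℝ → ℝ), (∀ x, φ x = 0 → deriv φ x = 0 → f x = 0) → HasCompactSupport f := by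
    intro f hf
    apply HasCompactSupport.intro (hc.union hc.deriv)
    intro x hx
    exact hf x (image_eq_zero_of_notMem_tsupport fun h => hx (Or.inl h))
      (image_eq_zero_of_notMem_tsupport fun h => hx (Or.inr h))
  set f1 : ℝ → ℝ := fun r => (deriv φ r) ^ 2 * Real.cosh r ^ (n : ℤ) with hf1
  set f2 : ℝ → ℝ := fun r => (φ r) ^ 2 * Real.cosh r ^ ((n : ℤ) - 2) with hf2
  set f3 : ℝ → ℝ := fun r =>
    (deriv φ r * Real.cosh r + (n : ℝ) * φ r * Real.sinh r) ^ 2 * Real.cosh r ^ ((n : ℤ) - 2) with hf3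
  have hint1 : Integrable f1 := by
    apply Continuous.integrable_of_hasCompactSupport
    · exact (hφ'.pow 2).mul (hzc _)
    · exact hsupp f1 (fun x h1 h2 => by simp [hf1, h2])
  have hint2 : Integrable f2 := by
    apply Continuous.integrable_of_hasCompactSupport
    · exact (hφc.pow 2).mul (hzc _)
    · exact hsupp f2 (fun x h1 h2 => by simp [hf2, h1])
  have hint3 : Integrable f3 := by
    apply Continuous.integrable_of_hasCompactSupport
    · exact (((hφ'.mul Real.continuous_cosh).add
        ((continuous_const.mul hφc).mul Real.continuous_sinh)).pow 2).mul (hzc _)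
    · exact hsupp f3 (fun x h1 h2 => by simp [hf3, h1, h2])
  have hintg' : Integrable g' := by
    apply Continuous.integrable_of_hasCompactSupport
    · simp only [hg']
      fun_prop
    · exact hsupp g' (fun x h1 h2 => by simp [hg', h1, h2])
  -- integral of deriv G is zero
  have hzero : ∫ r : ℝ, g' r = 0 := by
    rw [← hderivG]
    rw [← intervalIntegral.integral_Iic_add_Ioi (b := 0) ((hderivG ▸ hintg').integrableOn)
      ((hderivG ▸ hintg').integrableOn)]
    rw [hGsupp.integral_Iic_deriv_eq hGcd 0, hGsupp.integral_Ioi_deriv_eq hGcd 0]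
    ring
  -- pointwise identity
  have hpt : ∀ r, f1 r - (n : ℝ) * f2 r = f3 r - g' r := by
    intro r
    have hc2 : Real.cosh r ^ (n : ℤ) = Real.cosh r ^ 2 * Real.cosh r ^ ((n : ℤ) - 2) := by
      rw [← zpow_natCast (Real.cosh r) 2, ← zpow_add₀ (hcne r)]
      norm_num
    have hcm : (Real.cosh r : ℝ) ^ m = Real.cosh r * Real.cosh r ^ ((n : ℤ) - 2) := by
      have : ((m : ℤ)) = ((n : ℤ) - 2) + 1 := by omega
      rw [← zpow_natCast (Real.cosh r) m, this, zpow_add₀ (hcne r), zpow_one]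
      ring
    have hcm1 : ((m : ℝ)) * Real.cosh r ^ (m - 1) = ((n : ℝ) - 1) * Real.cosh r ^ ((n : ℤ) - 2) := by
      rcases Nat.lt_or_ge n 2 with h | h
      · interval_cases n
        simp [hm, zpow_sub₀ (hcne r)]
      · have h1 : m - 1 = n - 2 := by omega
        have h2 : ((n : ℤ) - 2) = ((n - 2 : ℕ) : ℤ) := by omega
        have h3 : ((m : ℝ)) = (n : ℝ) - 1 := by
          have : ((m : ℤ)) = (n : ℤ) - 1 := by omega
          exact_mod_cast congrArg (Int.cast : ℤ → ℝ) this
        rw [h1, h3, h2, zpow_natCast]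
    have hs2 : Real.sinh r ^ 2 = Real.cosh r ^ 2 - 1 := by
      have := Real.cosh_sq_sub_sinh_sq r
      linarith
    simp only [hf1, hf2, hf3, hg', hc2, hcm]
    linear_combination ((n : ℝ) * φ r ^ 2 * Real.sinh r ^ 2) * hcm1
      - ((n : ℝ) * φ r ^ 2 * Real.cosh r ^ ((n : ℤ) - 2)) * hs2
  -- assemble
  have hnonneg : 0 ≤ ∫ r : ℝ, f3 r := by
    apply integral_nonneg
    intro r
    exact mul_nonneg (sq_nonneg _) (le_of_lt (zpow_pos (Real.cosh_pos r) _))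
  have key : (∫ r : ℝ, f1 r) - (n : ℝ) * ∫ r : ℝ, f2 r = (∫ r : ℝ, f3 r) - ∫ r : ℝ, g' r := by
    rw [← MeasureTheory.integral_const_mul, ← integral_sub hint1 (hint2.const_mul _),
      ← integral_sub hint3 hintg']
    exact integral_congr_ae (Filter.Eventually.of_forall hpt)
  rw [ge_iff_le, ← sub_nonneg]
  rw [key, hzero, sub_zero]
  exact hnonneg
end

section
/- Let n ≥ 1 and p ∈ ℝ. For every smooth compactly supported φ : ℝ → ℝ, setting ψ(r) = φ(r) cosh(r)^p, one has ∫_ℝ φ'(r)² cosh(r)^n dr = ∫_ℝ ψ'(r)² cosh(r)^{n-2p} dr + p ∫_ℝ ψ(r)² cosh(r)^{n-2p} dr + p(n-p-1) ∫_ℝ ψ(r)² sinh(r)² cosh(r)^{n-2p-2} dr. -/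
open Real MeasureTheory

private lemma integral_deriv_zero_aux (g : ℝ → ℝ) (hg : ContDiff ℝ 1 g)
    (hgc : HasCompactSupport g) : ∫ r : ℝ, deriv g r = 0 := by
  have hint : Integrable (deriv g) :=
    (hg.continuous_deriv le_rfl).integrable_of_hasCompactSupport hgc.deriv
  have h := intervalIntegral.integral_Iic_add_Ioi (b := (0:ℝ)) hint.integrableOn hint.integrableOn
  rw [hgc.integral_Iic_deriv_eq hg 0, hgc.integral_Ioi_deriv_eq hg 0] at h
  linarith

theorem stmt_5 (n : ℕ) (hn : 1 ≤ n) (p : ℝ) (φ : ℝ → ℝ) (hφ : ContDiff ℝ (⊤ : ℕ∞) φ)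
    (hc : HasCompactSupport φ) (ψ : ℝ → ℝ) (hψ : ψ = fun r => φ r * Real.cosh r ^ p) :
    ∫ r : ℝ, (deriv φ r) ^ 2 * Real.cosh r ^ (n : ℝ)
      = (∫ r : ℝ, (deriv ψ r) ^ 2 * Real.cosh r ^ ((n : ℝ) - 2 * p))
        + p * (∫ r : ℝ, (ψ r) ^ 2 * Real.cosh r ^ ((n : ℝ) - 2 * p))
        + p * ((n : ℝ) - p - 1) *
            ∫ r : ℝ, (ψ r) ^ 2 * Real.sinh r ^ 2 * Real.cosh r ^ ((n : ℝ) - 2 * p - 2) := by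
  have cpos : ∀ r : ℝ, (0:ℝ) < Real.cosh r := Real.cosh_pos
  have cne : ∀ r : ℝ, Real.cosh r ≠ 0 := fun r => (cpos r).ne'
  have hψval : ∀ r, ψ r = φ r * Real.cosh r ^ p := fun r => by rw [hψ]
  have hcontφ : Continuous φ := hφ.continuous
  have hcontφ' : Continuous (deriv φ) := hφ.continuous_deriv (by simp)
  have hcontC : ∀ q : ℝ, Continuous (fun r : ℝ => Real.cosh r ^ q) := fun q =>
    Real.continuous_cosh.rpow_const (fun r => Or.inl (cne r))
  -- generic compact-support + integrability helper
  have hsupp : ∀ (h G : ℝ → ℝ), HasCompactSupport h → (∀ r, h r = 0 → G r = 0) →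
      HasCompactSupport G := by
    intro h G hh hz
    apply hh.mono'
    intro r hr
    apply subset_closure
    simp only [Function.mem_support] at hr ⊢
    intro h0; exact hr (hz r h0)
  have hIntg : ∀ (h G : ℝ → ℝ), HasCompactSupport h → Continuous G →
      (∀ r, h r = 0 → G r = 0) → Integrable G := fun h G hh hG hz =>
    hG.integrable_of_hasCompactSupport (hsupp h G hh hz)
  -- the four basic integrands
  have hI1int : Integrable (fun r => (deriv φ r) ^ 2 * Real.cosh r ^ (n:ℝ)) :=
    hIntg (deriv φ) _ hc.deriv ((hcontφ'.pow 2).mul (hcontC _)) (fun r h0 => by simp [h0])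
  have hI2int : Integrable (fun r => φ r * deriv φ r * Real.sinh r * Real.cosh r ^ ((n:ℝ)-1)) :=
    hIntg φ _ hc (((hcontφ.mul hcontφ').mul Real.continuous_sinh).mul (hcontC _))
      (fun r h0 => by simp [h0])
  have hI3int : Integrable (fun r => (φ r) ^ 2 * Real.sinh r ^ 2 * Real.cosh r ^ ((n:ℝ)-2)) :=
    hIntg φ _ hc (((hcontφ.pow 2).mul (Real.continuous_sinh.pow 2)).mul (hcontC _))
      (fun r h0 => by simp [h0])
  have hI4int : Integrable (fun r => (φ r) ^ 2 * Real.cosh r ^ (n:ℝ)) :=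
    hIntg φ _ hc ((hcontφ.pow 2).mul (hcontC _)) (fun r h0 => by simp [h0])
  -- derivative of ψ
  have hψd : ∀ r, HasDerivAt ψ
      (deriv φ r * Real.cosh r ^ p + φ r * (Real.sinh r * p * Real.cosh r ^ (p-1))) r := by
    intro r
    rw [hψ]
    exact ((hφ.differentiable (by simp) r).hasDerivAt).mul
      ((Real.hasDerivAt_cosh r).rpow_const (Or.inl (cne r)))
  have hψd' : ∀ r, deriv ψ r =
      deriv φ r * Real.cosh r ^ p + φ r * (Real.sinh r * p * Real.cosh r ^ (p-1)) :=
    fun r => (hψd r).deriv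
  -- pointwise identities
  have e1 : ∀ (a b : ℝ) (r : ℝ),
      Real.cosh r ^ a * Real.cosh r ^ b = Real.cosh r ^ (a + b) :=
    fun a b r => (Real.rpow_add (cpos r) a b).symm
  have hptA : ∀ r, (deriv ψ r) ^ 2 * Real.cosh r ^ ((n:ℝ) - 2 * p)
      = (deriv φ r) ^ 2 * Real.cosh r ^ (n:ℝ)
        + (2*p) * (φ r * deriv φ r * Real.sinh r * Real.cosh r ^ ((n:ℝ)-1))
        + p^2 * ((φ r) ^ 2 * Real.sinh r ^ 2 * Real.cosh r ^ ((n:ℝ)-2)) := by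
    intro r
    rw [hψd' r]
    have k1 : Real.cosh r ^ p * Real.cosh r ^ p * Real.cosh r ^ ((n:ℝ)-2*p)
        = Real.cosh r ^ (n:ℝ) := by
      rw [e1, e1]; congr 1; ring
    have k2 : Real.cosh r ^ p * Real.cosh r ^ (p-1) * Real.cosh r ^ ((n:ℝ)-2*p)
        = Real.cosh r ^ ((n:ℝ)-1) := by
      rw [e1, e1]; congr 1; ring
    have k3 : Real.cosh r ^ (p-1) * Real.cosh r ^ (p-1) * Real.cosh r ^ ((n:ℝ)-2*p)
        = Real.cosh r ^ ((n:ℝ)-2) := by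
      rw [e1, e1]; congr 1; ring
    linear_combination (deriv φ r)^2 * k1 + (2*p*φ r*deriv φ r*Real.sinh r) * k2
      + (p^2*(φ r)^2*Real.sinh r^2) * k3
  have hptB : ∀ r, (ψ r) ^ 2 * Real.cosh r ^ ((n:ℝ) - 2 * p)
      = (φ r) ^ 2 * Real.cosh r ^ (n:ℝ) := by
    intro r
    rw [hψval r]
    have k1 : Real.cosh r ^ p * Real.cosh r ^ p * Real.cosh r ^ ((n:ℝ)-2*p)
        = Real.cosh r ^ (n:ℝ) := by
      rw [e1, e1]; congr 1; ring
    linear_combination (φ r)^2 * k1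
  have hptC : ∀ r, (ψ r) ^ 2 * Real.sinh r ^ 2 * Real.cosh r ^ ((n:ℝ) - 2 * p - 2)
      = (φ r) ^ 2 * Real.sinh r ^ 2 * Real.cosh r ^ ((n:ℝ)-2) := by
    intro r
    rw [hψval r]
    have k1 : Real.cosh r ^ p * Real.cosh r ^ p * Real.cosh r ^ ((n:ℝ)-2*p-2)
        = Real.cosh r ^ ((n:ℝ)-2) := by
      rw [e1, e1]; congr 1; ring
    linear_combination (φ r)^2 * Real.sinh r^2 * k1
  -- integration by parts : ∫ deriv g = 0 for g = φ² sinh cosh^{n-1}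
  set g : ℝ → ℝ := fun r => (φ r) ^ 2 * (Real.sinh r * Real.cosh r ^ ((n:ℝ)-1)) with hgdef
  have hCsm : ContDiff ℝ 1 (fun r : ℝ => Real.cosh r ^ ((n:ℝ)-1)) := by
    rw [contDiff_iff_contDiffAt]
    intro r
    exact Real.contDiff_cosh.contDiffAt.rpow_const_of_ne (cne r)
  have hg1 : ContDiff ℝ 1 g :=
    ((hφ.of_le (by simp)).pow 2).mul (Real.contDiff_sinh.mul hCsm)
  have hgc : HasCompactSupport g := hsupp φ g hc (fun r h0 => by simp [hgdef, h0])
  have hgd : ∀ r, HasDerivAt g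
      ((2 * φ r ^ 1 * deriv φ r) * (Real.sinh r * Real.cosh r ^ ((n:ℝ)-1))
        + (φ r) ^ 2 * (Real.cosh r * Real.cosh r ^ ((n:ℝ)-1)
            + Real.sinh r * (Real.sinh r * ((n:ℝ)-1) * Real.cosh r ^ ((n:ℝ)-1-1)))) r := by
    intro r
    exact (((hφ.differentiable (by simp) r).hasDerivAt).pow 2).mul
      ((Real.hasDerivAt_sinh r).mul ((Real.hasDerivAt_cosh r).rpow_const (Or.inl (cne r))))
  have hgderiv : ∀ r, deriv g r
      = 2 * (φ r * deriv φ r * Real.sinh r * Real.cosh r ^ ((n:ℝ)-1))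
        + (φ r) ^ 2 * Real.cosh r ^ (n:ℝ)
        + ((n:ℝ)-1) * ((φ r) ^ 2 * Real.sinh r ^ 2 * Real.cosh r ^ ((n:ℝ)-2)) := by
    intro r
    rw [(hgd r).deriv]
    have k4 : Real.cosh r * Real.cosh r ^ ((n:ℝ)-1) = Real.cosh r ^ (n:ℝ) := by
      nth_rewrite 1 [← Real.rpow_one (Real.cosh r)]
      rw [e1]; congr 1; ring
    have k5 : Real.cosh r ^ ((n:ℝ)-1-1) = Real.cosh r ^ ((n:ℝ)-2) := by
      congr 1; ring
    rw [k5]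
    linear_combination (φ r)^2 * k4
  have hIBP : (∫ r : ℝ, deriv g r) = 0 := integral_deriv_zero_aux g hg1 hgc
  have hsplit : (∫ r : ℝ, deriv g r)
      = 2 * (∫ r : ℝ, φ r * deriv φ r * Real.sinh r * Real.cosh r ^ ((n:ℝ)-1))
        + (∫ r : ℝ, (φ r) ^ 2 * Real.cosh r ^ (n:ℝ))
        + ((n:ℝ)-1) * (∫ r : ℝ, (φ r) ^ 2 * Real.sinh r ^ 2 * Real.cosh r ^ ((n:ℝ)-2)) := by
    rw [show (deriv g) = (fun r =>
        2 * (φ r * deriv φ r * Real.sinh r * Real.cosh r ^ ((n:ℝ)-1))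
        + (φ r) ^ 2 * Real.cosh r ^ (n:ℝ)
        + ((n:ℝ)-1) * ((φ r) ^ 2 * Real.sinh r ^ 2 * Real.cosh r ^ ((n:ℝ)-2)))
      from funext hgderiv]
    have hs1 : Integrable (fun r => 2 * (φ r * deriv φ r * Real.sinh r * Real.cosh r ^ ((n:ℝ)-1))
        + (φ r) ^ 2 * Real.cosh r ^ (n:ℝ)) := (hI2int.const_mul 2).add hI4int
    have hs2 : Integrable (fun r => ((n:ℝ)-1) * ((φ r) ^ 2 * Real.sinh r ^ 2
        * Real.cosh r ^ ((n:ℝ)-2))) := hI3int.const_mul _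
    have hs3 : Integrable (fun r => 2 * (φ r * deriv φ r * Real.sinh r
        * Real.cosh r ^ ((n:ℝ)-1))) := hI2int.const_mul 2
    rw [integral_add hs1 hs2, integral_add hs3 hI4int, integral_const_mul, integral_const_mul]
  rw [hsplit] at hIBP
  -- rewrite the three RHS integrals
  have hA : (∫ r : ℝ, (deriv ψ r) ^ 2 * Real.cosh r ^ ((n : ℝ) - 2 * p))
      = (∫ r : ℝ, (deriv φ r) ^ 2 * Real.cosh r ^ (n:ℝ))
        + 2*p * (∫ r : ℝ, φ r * deriv φ r * Real.sinh r * Real.cosh r ^ ((n:ℝ)-1))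
        + p^2 * (∫ r : ℝ, (φ r) ^ 2 * Real.sinh r ^ 2 * Real.cosh r ^ ((n:ℝ)-2)) := by
    rw [show (fun r : ℝ => (deriv ψ r) ^ 2 * Real.cosh r ^ ((n : ℝ) - 2 * p)) = (fun r =>
        (deriv φ r) ^ 2 * Real.cosh r ^ (n:ℝ)
        + (2*p) * (φ r * deriv φ r * Real.sinh r * Real.cosh r ^ ((n:ℝ)-1))
        + p^2 * ((φ r) ^ 2 * Real.sinh r ^ 2 * Real.cosh r ^ ((n:ℝ)-2)))
      from funext hptA]
    have hs1 : Integrable (fun r => (deriv φ r) ^ 2 * Real.cosh r ^ (n:ℝ)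
        + (2*p) * (φ r * deriv φ r * Real.sinh r * Real.cosh r ^ ((n:ℝ)-1))) :=
      hI1int.add (hI2int.const_mul (2*p))
    have hs2 : Integrable (fun r => p^2 * ((φ r) ^ 2 * Real.sinh r ^ 2
        * Real.cosh r ^ ((n:ℝ)-2))) := hI3int.const_mul _
    have hs3 : Integrable (fun r => (2*p) * (φ r * deriv φ r * Real.sinh r
        * Real.cosh r ^ ((n:ℝ)-1))) := hI2int.const_mul (2*p)
    rw [integral_add hs1 hs2, integral_add hI1int hs3, integral_const_mul, integral_const_mul]
  have hB : (∫ r : ℝ, (ψ r) ^ 2 * Real.cosh r ^ ((n : ℝ) - 2 * p))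
      = ∫ r : ℝ, (φ r) ^ 2 * Real.cosh r ^ (n:ℝ) :=
    integral_congr_ae (Filter.Eventually.of_forall hptB)
  have hC : (∫ r : ℝ, (ψ r) ^ 2 * Real.sinh r ^ 2 * Real.cosh r ^ ((n : ℝ) - 2 * p - 2))
      = ∫ r : ℝ, (φ r) ^ 2 * Real.sinh r ^ 2 * Real.cosh r ^ ((n:ℝ)-2) :=
    integral_congr_ae (Filter.Eventually.of_forall hptC)
  rw [hA, hB, hC]
  linear_combination (-p) * hIBP
end

section
/- Let n ≥ 1. For every smooth compactly supported φ : ℝ → ℝ, ∫_ℝ φ'(r)² cosh(r)^n dr ≥ (n-1) ∫_ℝ φ(r)² cosh(r)^n dr. -/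
open Real MeasureTheory Set

/-- Integral of derivative of a compactly supported C¹ function over ℝ is 0. -/
lemma integral_deriv_zero (F : ℝ → ℝ) (hF : ContDiff ℝ 1 F) (hs : HasCompactSupport F) :
    ∫ x : ℝ, deriv F x = 0 := by
  have h1 := hs.integral_Iic_deriv_eq hF 0
  have h2 := hs.integral_Ioi_deriv_eq hF 0
  have hcont : Continuous (deriv F) := hF.continuous_deriv le_rfl
  have hint : Integrable (deriv F) := hcont.integrable_of_hasCompactSupport hs.deriv
  rw [← intervalIntegral.integral_Iic_add_Ioi (b := 0) hint.integrableOn hint.integrableOn,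
    h1, h2]
  ring

theorem stmt_6 (n : ℕ) (hn : 1 ≤ n) (φ : ℝ → ℝ) (hφ : ContDiff ℝ (⊤ : ℕ∞) φ)
    (hc : HasCompactSupport φ) :
    ∫ r : ℝ, (deriv φ r) ^ 2 * Real.cosh r ^ (n : ℤ)
      ≥ ((n : ℝ) - 1) * ∫ r : ℝ, (φ r) ^ 2 * Real.cosh r ^ (n : ℤ) := by
  simp only [zpow_natCast]
  have hφd : Differentiable ℝ φ := hφ.differentiable (by simp)
  have hderiv_cont : Continuous (deriv φ) := hφ.continuous_deriv (by simp)
  rcases eq_or_lt_of_le hn with h1 | h2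
  · -- case n = 1 : RHS is 0
    rw [← h1]
    norm_num
    exact integral_nonneg fun r => by positivity
  · -- case n ≥ 2
    obtain ⟨k, rfl⟩ : ∃ k, n = k + 2 := ⟨n - 2, by omega⟩
    set c : ℝ := (k : ℝ) + 1 with hcdef
    have hcn : ((k + 2 : ℕ) : ℝ) - 1 = c := by push_cast; ring
    rw [hcn]
    set g : ℝ → ℝ := fun r => deriv φ r + c * Real.tanh r * φ r with hg
    set F : ℝ → ℝ := fun r => φ r ^ 2 * (Real.sinh r * Real.cosh r ^ (k + 1)) with hF
    set D : ℝ → ℝ := fun r =>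
      2 * φ r * deriv φ r * (Real.sinh r * Real.cosh r ^ (k + 1))
        + φ r ^ 2 * (Real.cosh r ^ (k + 2) + ((k : ℝ) + 1) * Real.sinh r ^ 2 * Real.cosh r ^ k)
      with hD
    -- F has derivative D r at every r
    have hFd : ∀ r, HasDerivAt F (D r) r := by
      intro r
      have h1 : HasDerivAt (fun r => φ r ^ 2) (2 * φ r ^ 1 * deriv φ r) r := by
        have := (hφd r).hasDerivAt.fun_pow 2
        simpa using this
      have h2 : HasDerivAt (fun r => Real.sinh r * Real.cosh r ^ (k + 1))
          (Real.cosh r * Real.cosh r ^ (k + 1)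
            + Real.sinh r * (((k : ℝ) + 1) * Real.cosh r ^ k * Real.sinh r)) r := by
        have hp : HasDerivAt (fun r => Real.cosh r ^ (k + 1))
            (((k : ℝ) + 1) * Real.cosh r ^ k * Real.sinh r) r := by
          have := (Real.hasDerivAt_cosh r).fun_pow (k + 1)
          simpa [mul_comm, mul_assoc, mul_left_comm] using this
        simpa using (Real.hasDerivAt_sinh r).fun_mul hp
      have : HasDerivAt (fun i => φ i ^ 2 * (Real.sinh i * Real.cosh i ^ (k + 1))) _ r :=
        h1.fun_mul h2
      convert this using 1
      simp only [hD]
      ring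
    have hDeq : deriv F = D := funext fun r => (hFd r).deriv
    -- F is C¹ with compact support
    have hFc : ContDiff ℝ 1 F :=
      ((hφ.of_le (by simp)).pow 2).mul ((Real.contDiff_sinh.of_le le_top).mul
        ((Real.contDiff_cosh.of_le le_top).pow (k + 1)))
    have hFs : HasCompactSupport F := by
      have : F = (fun r => φ r * (φ r * (Real.sinh r * Real.cosh r ^ (k + 1)))) := by
        funext r; simp [hF]; ring
      rw [this]
      exact hc.mul_right
    have hintD : ∫ r : ℝ, D r = 0 := by rw [← hDeq]; exact integral_deriv_zero F hFc hFs
    -- integrability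
    have hcosh_cont : Continuous fun r : ℝ => Real.cosh r ^ (k + 2) :=
      Real.continuous_cosh.pow _
    have hI1 : Integrable fun r : ℝ => deriv φ r ^ 2 * Real.cosh r ^ (k + 2) := by
      apply Continuous.integrable_of_hasCompactSupport
        (((hderiv_cont.fun_pow 2).fun_mul hcosh_cont))
      have : (fun r : ℝ => deriv φ r ^ 2 * Real.cosh r ^ (k + 2))
          = (fun r => deriv φ r * (deriv φ r * Real.cosh r ^ (k + 2))) := by
        funext r; ring
      rw [this]
      exact hc.deriv.mul_right
    have hI2 : Integrable fun r : ℝ => φ r ^ 2 * Real.cosh r ^ (k + 2) := by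
      apply Continuous.integrable_of_hasCompactSupport
        (((hφ.continuous.fun_pow 2).fun_mul hcosh_cont))
      have : (fun r : ℝ => φ r ^ 2 * Real.cosh r ^ (k + 2))
          = (fun r => φ r * (φ r * Real.cosh r ^ (k + 2))) := by
        funext r; ring
      rw [this]
      exact hc.mul_right
    have hID : Integrable D := by
      rw [← hDeq]
      exact (hFc.continuous_deriv le_rfl).integrable_of_hasCompactSupport hFs.deriv
    -- pointwise identity
    have hpt : ∀ r : ℝ, g r ^ 2 * Real.cosh r ^ (k + 2)
        = deriv φ r ^ 2 * Real.cosh r ^ (k + 2)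
          - c * (φ r ^ 2 * Real.cosh r ^ (k + 2)) + c * D r := by
      intro r
      have hch : Real.cosh r ≠ 0 := (Real.cosh_pos r).ne'
      simp only [hg, hD, hcdef, Real.tanh_eq_sinh_div_cosh]
      have hsq : Real.sinh r ^ 2 = Real.cosh r ^ 2 - 1 := by
        have := Real.cosh_sq_sub_sinh_sq r; nlinarith
      field_simp
      ring
    -- conclude
    have key : ∫ r : ℝ, g r ^ 2 * Real.cosh r ^ (k + 2)
        = (∫ r : ℝ, deriv φ r ^ 2 * Real.cosh r ^ (k + 2))
          - c * ∫ r : ℝ, φ r ^ 2 * Real.cosh r ^ (k + 2) := by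
      calc ∫ r : ℝ, g r ^ 2 * Real.cosh r ^ (k + 2)
          = ∫ r : ℝ, (deriv φ r ^ 2 * Real.cosh r ^ (k + 2)
              - c * (φ r ^ 2 * Real.cosh r ^ (k + 2)) + c * D r) := by
            exact integral_congr_ae (Filter.Eventually.of_forall hpt)
        _ = (∫ r : ℝ, (deriv φ r ^ 2 * Real.cosh r ^ (k + 2)
              - c * (φ r ^ 2 * Real.cosh r ^ (k + 2)))) + ∫ r : ℝ, c * D r := by
            exact integral_add (hI1.sub (hI2.const_mul c)) (hID.const_mul c)
        _ = (∫ r : ℝ, deriv φ r ^ 2 * Real.cosh r ^ (k + 2))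
              - c * ∫ r : ℝ, φ r ^ 2 * Real.cosh r ^ (k + 2) := by
            rw [integral_sub hI1 (hI2.const_mul c), integral_const_mul,
              integral_const_mul, hintD]
            ring
    have hnn : 0 ≤ ∫ r : ℝ, g r ^ 2 * Real.cosh r ^ (k + 2) :=
      integral_nonneg fun r => mul_nonneg (sq_nonneg _) (pow_nonneg (Real.cosh_pos r).le _)
    rw [key] at hnn
    linarith
end

section
/- Let n ≥ 1. For every smooth compactly supported φ : ℝ → ℝ, ∫_ℝ φ'(r)² cosh(r)^n dr ≥ (n-1) ∫_ℝ φ(r)² sinh(r)² cosh(r)^{n-2} dr. -/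
open Real MeasureTheory

theorem stmt_7 (n : ℕ) (hn : 1 ≤ n) (φ : ℝ → ℝ) (hφ : ContDiff ℝ (⊤ : ℕ∞) φ)
    (hc : HasCompactSupport φ) :
    ∫ r : ℝ, (deriv φ r) ^ 2 * Real.cosh r ^ (n : ℤ)
      ≥ ((n : ℝ) - 1) * ∫ r : ℝ, (φ r) ^ 2 * Real.sinh r ^ 2 * Real.cosh r ^ ((n : ℤ) - 2) := by
  have hch : ∀ r : ℝ, Real.cosh r ≠ 0 := fun r => (Real.cosh_pos (x := r)).ne'
  set m : ℝ := (n : ℝ) - 1 with hm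
  have hm0 : 0 ≤ m := by
    rw [hm, sub_nonneg]
    exact_mod_cast hn
  have hφcont : Continuous φ := hφ.continuous
  have hφdiff : Differentiable ℝ φ := hφ.differentiable (by simp)
  have hdcont : Continuous (deriv φ) := hφ.continuous_deriv (by simp)
  have hczpow : ∀ k : ℤ, Continuous fun r : ℝ => Real.cosh r ^ k := fun k =>
    Real.continuous_cosh.zpow₀ k (fun r => Or.inl (hch r))
  -- power splitting identities
  have e1 : ∀ r : ℝ, Real.cosh r ^ (n : ℤ)
      = Real.cosh r * (Real.cosh r * Real.cosh r ^ ((n : ℤ) - 2)) := by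
    intro r
    conv_lhs => rw [show (n : ℤ) = 1 + (1 + ((n : ℤ) - 2)) by ring]
    rw [zpow_add₀ (hch r), zpow_add₀ (hch r), zpow_one]
  have e2 : ∀ r : ℝ, Real.cosh r ^ ((n : ℤ) - 1)
      = Real.cosh r * Real.cosh r ^ ((n : ℤ) - 2) := by
    intro r
    conv_lhs => rw [show (n : ℤ) - 1 = 1 + ((n : ℤ) - 2) by ring]
    rw [zpow_add₀ (hch r), zpow_one]
  -- the four integrands
  set F1 : ℝ → ℝ := fun r => (deriv φ r) ^ 2 * Real.cosh r ^ (n : ℤ) with hF1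
  set F2 : ℝ → ℝ := fun r => φ r * deriv φ r * Real.sinh r * Real.cosh r ^ ((n : ℤ) - 1) with hF2
  set FA : ℝ → ℝ := fun r => (φ r) ^ 2 * Real.cosh r ^ (n : ℤ) with hFA
  set FB : ℝ → ℝ := fun r => (φ r) ^ 2 * Real.sinh r ^ 2 * Real.cosh r ^ ((n : ℤ) - 2) with hFB
  have hF1c : Continuous F1 := (hdcont.pow 2).mul (hczpow _)
  have hF2c : Continuous F2 :=
    ((hφcont.mul hdcont).mul Real.continuous_sinh).mul (hczpow _)
  have hFAc : Continuous FA := (hφcont.pow 2).mul (hczpow _)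
  have hFBc : Continuous FB := ((hφcont.pow 2).mul (Real.continuous_sinh.pow 2)).mul (hczpow _)
  -- compact supports
  have key : ∀ {f g : ℝ → ℝ}, HasCompactSupport f → (∀ x, f x = 0 → g x = 0) →
      HasCompactSupport g := by
    intro f g hf h
    exact hf.mono (Function.support_subset_iff.2 fun x hx => by
      simp only [Function.mem_support]
      intro h0
      exact hx (h x h0))
  have hF1s : HasCompactSupport F1 :=
    key hc.deriv (fun x hx => by simp [hF1, hx])
  have hF2s : HasCompactSupport F2 :=
    key hc (fun x hx => by simp [hF2, hx])
  have hFAs : HasCompactSupport FA :=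
    key hc (fun x hx => by simp [hFA, hx])
  have hFBs : HasCompactSupport FB :=
    key hc (fun x hx => by simp [hFB, hx])
  have hiF1 : Integrable F1 := hF1c.integrable_of_hasCompactSupport hF1s
  have hiF2 : Integrable F2 := hF2c.integrable_of_hasCompactSupport hF2s
  have hiFA : Integrable FA := hFAc.integrable_of_hasCompactSupport hFAs
  have hiFB : Integrable FB := hFBc.integrable_of_hasCompactSupport hFBs
  -- integration by parts: derivative of g = φ² sinh cosh^{n-1}
  set g : ℝ → ℝ := fun r => φ r ^ 2 * (Real.sinh r * Real.cosh r ^ ((n : ℤ) - 1)) with hg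
  have hgderiv : ∀ r : ℝ, HasDerivAt g (2 * F2 r + FA r + m * FB r) r := by
    intro r
    have h1 : HasDerivAt (fun x => φ x ^ 2) (2 * φ r ^ 1 * deriv φ r) r :=
      (hφdiff r).hasDerivAt.pow 2
    have h3 : HasDerivAt (fun x => Real.cosh x ^ ((n : ℤ) - 1))
        ((((n : ℤ) - 1 : ℤ) : ℝ) * Real.cosh r ^ ((n : ℤ) - 1 - 1) * Real.sinh r) r :=
      (hasDerivAt_zpow ((n : ℤ) - 1) (Real.cosh r) (Or.inl (hch r))).comp r
        (Real.hasDerivAt_cosh r)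
    have h2 : HasDerivAt Real.sinh (Real.cosh r) r := Real.hasDerivAt_sinh r
    have h : HasDerivAt (fun x => φ x ^ 2 * (Real.sinh x * Real.cosh x ^ ((n : ℤ) - 1)))
        (2 * φ r ^ 1 * deriv φ r * (Real.sinh r * Real.cosh r ^ ((n : ℤ) - 1)) +
          φ r ^ 2 * (Real.cosh r * Real.cosh r ^ ((n : ℤ) - 1) + Real.sinh r *
            ((((n : ℤ) - 1 : ℤ) : ℝ) * Real.cosh r ^ ((n : ℤ) - 1 - 1) * Real.sinh r))) r :=
      h1.mul (h2.mul h3)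
    convert h using 1
    simp only [hF2, hFA, hFB, hm]
    rw [show (n : ℤ) - 1 - 1 = (n : ℤ) - 2 by ring, e1 r, e2 r]
    push_cast
    ring
  have hgs : HasCompactSupport g := key hc (fun x hx => by simp [hg, hx])
  have hgc : Continuous g :=
    (hφcont.pow 2).mul (Real.continuous_sinh.mul (hczpow _))
  have hig : Integrable g := hgc.integrable_of_hasCompactSupport hgs
  have hisum : Integrable fun r => 2 * F2 r + FA r + m * FB r :=
    ((hiF2.const_mul 2).add hiFA).add (hiFB.const_mul m)
  have h0 : ∫ r : ℝ, (2 * F2 r + FA r + m * FB r) = 0 :=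
    integral_eq_zero_of_hasDerivAt_of_integrable hgderiv hisum hig
  have ia1 : Integrable (fun r => 2 * F2 r) := hiF2.const_mul 2
  have ia2 : Integrable (fun r => 2 * F2 r + FA r) := ia1.add hiFA
  have ia3 : Integrable (fun r => m * FB r) := hiFB.const_mul m
  rw [integral_add ia2 ia3, integral_add ia1 hiFA, integral_const_mul, integral_const_mul] at h0
  -- nonnegativity of the square integral
  set Q : ℝ → ℝ := fun r =>
    (deriv φ r * Real.cosh r + m * (φ r * Real.sinh r)) ^ 2 * Real.cosh r ^ ((n : ℤ) - 2) with hQ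
  have hQeq : Q = fun r => F1 r + 2 * m * F2 r + m ^ 2 * FB r := by
    funext r
    simp only [hQ, hF1, hF2, hFB]
    rw [e1 r, e2 r]
    ring
  have hQnn : 0 ≤ ∫ r : ℝ, Q r :=
    integral_nonneg fun r =>
      mul_nonneg (sq_nonneg _) (zpow_pos (Real.cosh_pos (x := r)) _).le
  have hQint : ∫ r : ℝ, Q r
      = (∫ r : ℝ, F1 r) + 2 * m * (∫ r : ℝ, F2 r) + m ^ 2 * ∫ r : ℝ, FB r := by
    have ib1 : Integrable (fun r => 2 * m * F2 r) := hiF2.const_mul _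
    have ib2 : Integrable (fun r => F1 r + 2 * m * F2 r) := hiF1.add ib1
    have ib3 : Integrable (fun r => m ^ 2 * FB r) := hiFB.const_mul _
    rw [hQeq, integral_add ib2 ib3, integral_add hiF1 ib1, integral_const_mul, integral_const_mul]
  -- pointwise comparison A ≥ B
  have hAB : (∫ r : ℝ, FB r) ≤ ∫ r : ℝ, FA r := by
    apply integral_mono hiFB hiFA
    intro r
    have hs : Real.sinh r ^ 2 ≤ Real.cosh r * Real.cosh r := by
      nlinarith [Real.cosh_sq' r]
    simp only [hFB, hFA]
    rw [e1 r]
    have hz : (0 : ℝ) ≤ Real.cosh r ^ ((n : ℤ) - 2) :=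
      (zpow_pos (Real.cosh_pos (x := r)) _).le
    calc φ r ^ 2 * Real.sinh r ^ 2 * Real.cosh r ^ ((n : ℤ) - 2)
        ≤ φ r ^ 2 * (Real.cosh r * Real.cosh r) * Real.cosh r ^ ((n : ℤ) - 2) := by
          apply mul_le_mul_of_nonneg_right (mul_le_mul_of_nonneg_left hs (sq_nonneg _)) hz
      _ = φ r ^ 2 * (Real.cosh r * (Real.cosh r * Real.cosh r ^ ((n : ℤ) - 2))) := by ring
  rw [hQint] at hQnn
  nlinarith [hQnn, h0, hAB, hm0, mul_le_mul_of_nonneg_left hAB hm0]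
end

section
/- Let n ≥ 2, λ > 0 and μ = -(n-1)/2 + √((n-1)²/4 + λ). For every smooth compactly supported φ : (0,π) → ℝ, writing ψ(r) = φ(r) sin(r)^{-μ}, one has ∫_0^π φ'(r)² sin(r)^n dr = ∫_0^π ψ'(r)² sin(r)^{n+2μ} dr - μ(n+μ-1) ∫_0^π ψ(r)² cos(r)² sin(r)^{n+2(μ-1)} dr + μ ∫_0^π ψ(r)² sin(r)^{n+2μ} dr. -/
open MeasureTheory Real Set

theorem stmt_10 (n : ℕ) (hn : 2 ≤ n) (lam : ℝ) (hl : 0 < lam) (μ : ℝ)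
    (hμ : μ = -((n : ℝ) - 1) / 2 + Real.sqrt (((n : ℝ) - 1) ^ 2 / 4 + lam))
    (φ : ℝ → ℝ) (hφ : ContDiff ℝ (⊤ : ℕ∞) φ) (hc : HasCompactSupport φ)
    (hsupp : tsupport φ ⊆ Set.Ioo 0 Real.pi)
    (ψ : ℝ → ℝ) (hψ : ψ = fun r => φ r * Real.sin r ^ (-μ)) :
    ∫ r in Set.Ioo 0 Real.pi, (deriv φ r) ^ 2 * Real.sin r ^ (n : ℝ)
      = (∫ r in Set.Ioo 0 Real.pi, (deriv ψ r) ^ 2 * Real.sin r ^ ((n : ℝ) + 2 * μ))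
        - μ * ((n : ℝ) + μ - 1) *
            (∫ r in Set.Ioo 0 Real.pi,
              (ψ r) ^ 2 * Real.cos r ^ 2 * Real.sin r ^ ((n : ℝ) + 2 * (μ - 1)))
        + μ * ∫ r in Set.Ioo 0 Real.pi, (ψ r) ^ 2 * Real.sin r ^ ((n : ℝ) + 2 * μ) := by
  have hpi : (0:ℝ) < Real.pi := Real.pi_pos
  set K := tsupport φ with hKdef
  have hKc : IsCompact K := hc
  have hopen : IsOpen (Set.Ioo (0:ℝ) Real.pi) := isOpen_Ioo
  have hKco : IsOpen Kᶜ := (isClosed_tsupport φ).isOpen_compl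
  have hcover : ∀ x : ℝ, x ∈ Set.Ioo (0:ℝ) Real.pi ∨ x ∉ K := by
    intro x
    by_cases hx : x ∈ K
    · exact Or.inl (hsupp hx)
    · exact Or.inr hx
  have hsin : ∀ x ∈ Set.Ioo (0:ℝ) Real.pi, 0 < Real.sin x :=
    fun x hx => Real.sin_pos_of_pos_of_lt_pi hx.1 hx.2
  have hψr : ∀ r, ψ r = φ r * Real.sin r ^ (-μ) := fun r => by rw [hψ]
  have hψ0 : ∀ x ∉ K, ψ x = 0 := by
    intro x hx
    rw [hψr, image_eq_zero_of_notMem_tsupport hx, zero_mul]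
  -- smoothness of ψ
  have hψsm : ContDiff ℝ (⊤ : ℕ∞) ψ := by
    rw [contDiff_iff_contDiffAt]
    intro x
    rcases hcover x with hx | hx
    · have h1 : ContDiffAt ℝ (⊤ : ℕ∞) (fun r => φ r * Real.sin r ^ (-μ)) x :=
        hφ.contDiffAt.mul ((Real.contDiff_sin.contDiffAt).rpow_const_of_ne (hsin x hx).ne')
      exact hψ ▸ h1
    · have hev : ψ =ᶠ[nhds x] (fun _ => (0:ℝ)) :=
        Filter.eventually_of_mem (hKco.mem_nhds hx) (fun y hy => hψ0 y hy)
      exact (contDiffAt_const (c := (0:ℝ))).congr_of_eventuallyEq hev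
  have hψdiff : Differentiable ℝ ψ := hψsm.differentiable (by simp)
  have hψcont : Continuous ψ := hψsm.continuous
  have hdψcont : Continuous (deriv ψ) := hψsm.continuous_deriv (by simp)
  have hdψ0 : ∀ x ∉ K, deriv ψ x = 0 := by
    intro x hx
    have hev : ψ =ᶠ[nhds x] (fun _ => (0:ℝ)) :=
      Filter.eventually_of_mem (hKco.mem_nhds hx) (fun y hy => hψ0 y hy)
    rw [hev.deriv_eq]
    exact deriv_const x 0
  -- continuity gluing
  have hglue : ∀ f : ℝ → ℝ, (∀ x ∈ Set.Ioo (0:ℝ) Real.pi, ContinuousAt f x) →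
      (∀ x ∉ K, f x = 0) → Continuous f := by
    intro f h1 h0
    rw [continuous_iff_continuousAt]
    intro x
    rcases hcover x with hx | hx
    · exact h1 x hx
    · have hev : f =ᶠ[nhds x] (fun _ => (0:ℝ)) :=
        Filter.eventually_of_mem (hKco.mem_nhds hx) (fun y hy => h0 y hy)
      exact continuousAt_const.congr hev.symm
  have hsinc : ∀ (p : ℝ) (x : ℝ), x ∈ Set.Ioo (0:ℝ) Real.pi →
      ContinuousAt (fun r => Real.sin r ^ p) x := by
    intro p x hx
    exact (Real.continuousAt_rpow_const _ p (Or.inl (hsin x hx).ne')).comp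
      Real.continuous_sin.continuousAt
  have hint : ∀ f : ℝ → ℝ, Continuous f → (∀ x ∉ K, f x = 0) →
      MeasureTheory.IntegrableOn f (Set.Ioo 0 Real.pi) := by
    intro f hf h0
    exact (hf.integrable_of_hasCompactSupport (HasCompactSupport.intro hKc h0)).integrableOn
  set e : ℝ := (n : ℝ) + 2 * μ with hedef
  set f1 : ℝ → ℝ := fun r => (deriv ψ r) ^ 2 * Real.sin r ^ e with hf1
  set f2 : ℝ → ℝ := fun r => (ψ r) ^ 2 * Real.cos r ^ 2 * Real.sin r ^ (e - 2) with hf2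
  set f3 : ℝ → ℝ := fun r => (ψ r) ^ 2 * Real.sin r ^ e with hf3
  set f4 : ℝ → ℝ := fun r => ψ r * deriv ψ r * Real.cos r * Real.sin r ^ (e - 1) with hf4
  have hi1 : MeasureTheory.IntegrableOn f1 (Set.Ioo 0 Real.pi) := by
    refine hint f1 (hglue f1 (fun x hx => ((hdψcont.continuousAt).pow 2).mul (hsinc e x hx)) ?_) ?_
    all_goals intro x hx; simp [hf1, hdψ0 x hx]
  have hi2 : MeasureTheory.IntegrableOn f2 (Set.Ioo 0 Real.pi) := by
    refine hint f2 (hglue f2 (fun x hx =>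
      (((hψcont.continuousAt).pow 2).mul ((Real.continuous_cos.continuousAt).pow 2)).mul
        (hsinc (e-2) x hx)) ?_) ?_
    all_goals intro x hx; simp [hf2, hψ0 x hx]
  have hi3 : MeasureTheory.IntegrableOn f3 (Set.Ioo 0 Real.pi) := by
    refine hint f3 (hglue f3 (fun x hx => ((hψcont.continuousAt).pow 2).mul (hsinc e x hx)) ?_) ?_
    all_goals intro x hx; simp [hf3, hψ0 x hx]
  have hi4 : MeasureTheory.IntegrableOn f4 (Set.Ioo 0 Real.pi) := by
    refine hint f4 (hglue f4 (fun x hx =>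
      (((hψcont.continuousAt).mul (hdψcont.continuousAt)).mul
        (Real.continuous_cos.continuousAt)).mul (hsinc (e-1) x hx)) ?_) ?_
    all_goals intro x hx; simp [hf4, hψ0 x hx]
  -- rpow addition helper
  have hradd : ∀ x ∈ Set.Ioo (0:ℝ) Real.pi, ∀ p q : ℝ,
      Real.sin x ^ (p + q) = Real.sin x ^ p * Real.sin x ^ q :=
    fun x hx p q => Real.rpow_add (hsin x hx) p q
  -- pointwise identity for deriv φ
  have hpoint : ∀ r ∈ Set.Ioo (0:ℝ) Real.pi,
      (deriv φ r) ^ 2 * Real.sin r ^ (n : ℝ) = f1 r + (2*μ) * f4 r + μ^2 * f2 r := by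
    intro r hr
    have hs := hsin r hr
    have hφψ : Set.EqOn φ (fun x => ψ x * Real.sin x ^ μ) (Set.Ioo 0 Real.pi) := by
      intro x hx
      have hsx := hsin x hx
      show φ x = ψ x * Real.sin x ^ μ
      rw [hψr, mul_assoc, ← Real.rpow_add hsx, neg_add_cancel, Real.rpow_zero, mul_one]
    have hev : φ =ᶠ[nhds r] (fun x => ψ x * Real.sin x ^ μ) :=
      Filter.eventually_of_mem (hopen.mem_nhds hr) hφψ
    have hd : HasDerivAt (fun x => ψ x * Real.sin x ^ μ)
        (deriv ψ r * Real.sin r ^ μ + ψ r * (Real.cos r * μ * Real.sin r ^ (μ - 1))) r :=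
      (hψdiff r).hasDerivAt.mul ((Real.hasDerivAt_sin r).rpow_const (Or.inl hs.ne'))
    have hdφ : deriv φ r
        = deriv ψ r * Real.sin r ^ μ + ψ r * (Real.cos r * μ * Real.sin r ^ (μ - 1)) := by
      rw [hev.deriv_eq, hd.deriv]
    have e1 : Real.sin r ^ e = Real.sin r ^ (n:ℝ) * Real.sin r ^ μ * Real.sin r ^ μ := by
      rw [show e = ((n:ℝ) + μ) + μ by rw [hedef]; ring, hradd r hr, hradd r hr]
    have e2 : Real.sin r ^ (e-1)
        = Real.sin r ^ (n:ℝ) * Real.sin r ^ μ * Real.sin r ^ (μ-1) := by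
      rw [show e - 1 = ((n:ℝ) + μ) + (μ - 1) by rw [hedef]; ring, hradd r hr, hradd r hr]
    have e3 : Real.sin r ^ (e-2)
        = Real.sin r ^ (n:ℝ) * Real.sin r ^ (μ-1) * Real.sin r ^ (μ-1) := by
      rw [show e - 2 = ((n:ℝ) + (μ-1)) + (μ - 1) by rw [hedef]; ring, hradd r hr, hradd r hr]
    simp only [hf1, hf2, hf4]
    rw [hdφ, e1, e2, e3]
    ring
  -- integration by parts
  set F : ℝ → ℝ := fun r => (ψ r) ^ 2 * (Real.cos r * Real.sin r ^ (e - 1)) with hFdef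
  set G : ℝ → ℝ := fun r => 2 * f4 r - f3 r + (e - 1) * f2 r with hGdef
  have hF0 : ∀ x ∉ K, F x = 0 := by intro x hx; simp [hFdef, hψ0 x hx]
  have hG0 : ∀ x ∉ K, G x = 0 := by
    intro x hx; simp [hGdef, hf2, hf3, hf4, hψ0 x hx]
  have hFderiv : ∀ r : ℝ, HasDerivAt F (G r) r := by
    intro r
    rcases hcover r with hr | hr
    · have hs := hsin r hr
      have h1 : HasDerivAt (fun x => (ψ x) ^ 2)
          ((2:ℕ) * ψ r ^ (2-1) * deriv ψ r) r := (hψdiff r).hasDerivAt.pow 2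
      have h2 : HasDerivAt (fun x => Real.sin x ^ (e-1))
          (Real.cos r * (e-1) * Real.sin r ^ (e - 1 - 1)) r :=
        (Real.hasDerivAt_sin r).rpow_const (Or.inl hs.ne')
      have h3 := (Real.hasDerivAt_cos r).mul h2
      have h4 : HasDerivAt (fun x => (ψ x) ^ 2 * (Real.cos x * Real.sin x ^ (e - 1))) _ r :=
        h1.mul h3
      convert h4 using 1
      have es : Real.sin r ^ e = Real.sin r * Real.sin r ^ (e - 1) := by
        have h := hradd r hr 1 (e - 1)
        rw [Real.rpow_one] at h
        rw [show (1:ℝ) + (e - 1) = e by ring] at h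
        exact h
      simp only [hGdef, hf2, hf3, hf4]
      rw [es, show e - 1 - 1 = e - 2 by ring]
      push_cast
      ring
    · have hev : F =ᶠ[nhds r] (fun _ => (0:ℝ)) :=
        Filter.eventually_of_mem (hKco.mem_nhds hr) (fun y hy => hF0 y hy)
      have : HasDerivAt F 0 r :=
        (hasDerivAt_const r (0:ℝ)).congr_of_eventuallyEq hev
      rw [hG0 r hr]
      exact this
  have hGcont : Continuous G := by
    refine hglue G (fun x hx => ?_) hG0
    have c4 : ContinuousAt f4 x :=
      (((hψcont.continuousAt).mul (hdψcont.continuousAt)).mul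
        (Real.continuous_cos.continuousAt)).mul (hsinc (e-1) x hx)
    have c3 : ContinuousAt f3 x := ((hψcont.continuousAt).pow 2).mul (hsinc e x hx)
    have c2 : ContinuousAt f2 x :=
      (((hψcont.continuousAt).pow 2).mul ((Real.continuous_cos.continuousAt).pow 2)).mul
        (hsinc (e-2) x hx)
    exact ((c4.const_mul 2).sub c3).add (c2.const_mul (e-1))
  have hIBP : ∫ r in Set.Ioo 0 Real.pi, G r = 0 := by
    have h1 : ∫ r in Set.Ioo 0 Real.pi, G r = ∫ r in (0:ℝ)..Real.pi, G r := by
      rw [intervalIntegral.integral_of_le hpi.le, MeasureTheory.integral_Ioc_eq_integral_Ioo]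
    rw [h1, intervalIntegral.integral_eq_sub_of_hasDerivAt
      (fun x _ => hFderiv x) (hGcont.intervalIntegrable 0 Real.pi)]
    have hπK : Real.pi ∉ K := fun h => (hsupp h).2.ne rfl
    have h0K : (0:ℝ) ∉ K := fun h => (hsupp h).1.ne rfl
    rw [hF0 _ hπK, hF0 _ h0K, sub_zero]
  -- split hIBP into integrals
  have hsplit : (∫ r in Set.Ioo 0 Real.pi, G r)
      = 2 * (∫ r in Set.Ioo 0 Real.pi, f4 r) - (∫ r in Set.Ioo 0 Real.pi, f3 r)
        + (e - 1) * (∫ r in Set.Ioo 0 Real.pi, f2 r) := by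
    have h1 : (∫ r in Set.Ioo 0 Real.pi, (2 * f4 r - f3 r + (e-1) * f2 r))
        = (∫ r in Set.Ioo 0 Real.pi, (2 * f4 r - f3 r))
          + ∫ r in Set.Ioo 0 Real.pi, (e-1) * f2 r :=
      MeasureTheory.integral_add ((hi4.const_mul 2).sub hi3) (hi2.const_mul (e-1))
    have h2 : (∫ r in Set.Ioo 0 Real.pi, (2 * f4 r - f3 r))
        = (∫ r in Set.Ioo 0 Real.pi, 2 * f4 r) - ∫ r in Set.Ioo 0 Real.pi, f3 r :=
      MeasureTheory.integral_sub (hi4.const_mul 2) hi3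
    simp only [hGdef]
    rw [h1, h2, MeasureTheory.integral_const_mul, MeasureTheory.integral_const_mul]
  -- rewrite LHS
  have hLHS : (∫ r in Set.Ioo 0 Real.pi, (deriv φ r) ^ 2 * Real.sin r ^ (n:ℝ))
      = (∫ r in Set.Ioo 0 Real.pi, f1 r) + (2*μ) * (∫ r in Set.Ioo 0 Real.pi, f4 r)
        + μ^2 * (∫ r in Set.Ioo 0 Real.pi, f2 r) := by
    have h1 : (∫ r in Set.Ioo 0 Real.pi, (f1 r + (2*μ) * f4 r + μ^2 * f2 r))
        = (∫ r in Set.Ioo 0 Real.pi, (f1 r + (2*μ) * f4 r))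
          + ∫ r in Set.Ioo 0 Real.pi, μ^2 * f2 r :=
      MeasureTheory.integral_add (hi1.add (hi4.const_mul (2*μ))) (hi2.const_mul (μ^2))
    have h2 : (∫ r in Set.Ioo 0 Real.pi, (f1 r + (2*μ) * f4 r))
        = (∫ r in Set.Ioo 0 Real.pi, f1 r) + ∫ r in Set.Ioo 0 Real.pi, (2*μ) * f4 r :=
      MeasureTheory.integral_add hi1 (hi4.const_mul (2*μ))
    rw [MeasureTheory.setIntegral_congr_fun measurableSet_Ioo hpoint, h1, h2,
      MeasureTheory.integral_const_mul, MeasureTheory.integral_const_mul]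
  have hexp : (n:ℝ) + 2 * (μ - 1) = e - 2 := by rw [hedef]; ring
  rw [hexp]
  have hg1 : (∫ r in Set.Ioo 0 Real.pi, (deriv ψ r) ^ 2 * Real.sin r ^ ((n:ℝ) + 2*μ))
      = ∫ r in Set.Ioo 0 Real.pi, f1 r := rfl
  have hg2 : (∫ r in Set.Ioo 0 Real.pi, (ψ r) ^ 2 * Real.cos r ^ 2 * Real.sin r ^ (e-2))
      = ∫ r in Set.Ioo 0 Real.pi, f2 r := rfl
  have hg3 : (∫ r in Set.Ioo 0 Real.pi, (ψ r) ^ 2 * Real.sin r ^ ((n:ℝ) + 2*μ))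
      = ∫ r in Set.Ioo 0 Real.pi, f3 r := rfl
  rw [hg1, hg2, hg3, hLHS]
  have heq : (0:ℝ) = 2 * (∫ r in Set.Ioo 0 Real.pi, f4 r) - (∫ r in Set.Ioo 0 Real.pi, f3 r)
      + (e - 1) * (∫ r in Set.Ioo 0 Real.pi, f2 r) := by rw [← hsplit, hIBP]
  have hee : e = (n:ℝ) + 2*μ := hedef
  linear_combination μ * heq.symm + (μ * (∫ r in Set.Ioo 0 Real.pi, f2 r)) * hee
end

section
/- Let n ≥ 2 and λ > 0, and set μ = -(n-1)/2 + √((n-1)²/4 + λ). For every smooth compactly supported φ : (0,π) → ℝ, ∫_0^π φ'(r)² sin(r)^n dr + λ ∫_0^π φ(r)² sin(r)^{n-2} dr ≥ (λ + μ) ∫_0^π φ(r)² sin(r)^n dr. -/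
theorem stmt_11 (n : ℕ) (hn : 2 ≤ n) (lam : ℝ) (hl : 0 < lam) (μ : ℝ)
    (hμ : μ = -((n : ℝ) - 1) / 2 + Real.sqrt (((n : ℝ) - 1) ^ 2 / 4 + lam))
    (φ : ℝ → ℝ) (hφ : ContDiff ℝ (⊤ : ℕ∞) φ) (hc : HasCompactSupport φ)
    (hsupp : tsupport φ ⊆ Set.Ioo 0 Real.pi) :
    (∫ r in Set.Ioo 0 Real.pi, (deriv φ r) ^ 2 * Real.sin r ^ (n : ℝ))
      + lam * ∫ r in Set.Ioo 0 Real.pi, (φ r) ^ 2 * Real.sin r ^ ((n : ℝ) - 2)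
      ≥ (lam + μ) * ∫ r in Set.Ioo 0 Real.pi, (φ r) ^ 2 * Real.sin r ^ (n : ℝ) := by
  obtain ⟨k, rfl⟩ : ∃ k, n = k + 2 := ⟨n - 2, by omega⟩
  have hcast : ((k + 2 : ℕ) : ℝ) - 2 = ((k : ℕ) : ℝ) := by push_cast; ring
  simp only [hcast, Real.rpow_natCast]
  push_cast at hμ
  have hφc : Continuous φ := hφ.continuous
  have hφ' : Continuous (deriv φ) := hφ.continuous_deriv (by simp)
  have II : ∀ f : ℝ → ℝ, Continuous f → MeasureTheory.IntegrableOn f (Set.Ioo 0 Real.pi) :=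
    fun f hf => (hf.integrableOn_Icc).mono_set Set.Ioo_subset_Icc_self
  have i1 := II (fun r => deriv φ r ^ 2 * Real.sin r ^ (k + 2))
    ((hφ'.pow 2).mul (Real.continuous_sin.pow _))
  have i2 := II (fun r => φ r * deriv φ r * Real.cos r * Real.sin r ^ (k + 1))
    (((hφc.mul hφ').mul Real.continuous_cos).mul (Real.continuous_sin.pow _))
  have i3 := II (fun r => φ r ^ 2 * Real.cos r ^ 2 * Real.sin r ^ k)
    (((hφc.pow 2).mul (Real.continuous_cos.pow 2)).mul (Real.continuous_sin.pow _))
  have i4 := II (fun r => φ r ^ 2 * Real.sin r ^ (k + 2))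
    ((hφc.pow 2).mul (Real.continuous_sin.pow _))
  have i5 := II (fun r => φ r ^ 2 * Real.sin r ^ k)
    ((hφc.pow 2).mul (Real.continuous_sin.pow _))
  set A := ∫ r in Set.Ioo 0 Real.pi, deriv φ r ^ 2 * Real.sin r ^ (k + 2) with hA
  set B := ∫ r in Set.Ioo 0 Real.pi, φ r * deriv φ r * Real.cos r * Real.sin r ^ (k + 1) with hB
  set C := ∫ r in Set.Ioo 0 Real.pi, φ r ^ 2 * Real.cos r ^ 2 * Real.sin r ^ k with hC
  set D := ∫ r in Set.Ioo 0 Real.pi, φ r ^ 2 * Real.sin r ^ (k + 2) with hD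
  set E := ∫ r in Set.Ioo 0 Real.pi, φ r ^ 2 * Real.sin r ^ k with hE
  -- μ² + (k+1) μ = lam
  have hsq : Real.sqrt (((k : ℝ) + 2 - 1) ^ 2 / 4 + lam) ^ 2
      = ((k : ℝ) + 2 - 1) ^ 2 / 4 + lam := Real.sq_sqrt (by positivity)
  have hsqrt : Real.sqrt (((k : ℝ) + 2 - 1) ^ 2 / 4 + lam) = μ + ((k : ℝ) + 1) / 2 := by
    rw [hμ]; ring
  rw [hsqrt] at hsq
  have S4 : μ ^ 2 + ((k : ℝ) + 1) * μ = lam := by nlinarith [hsq]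
  -- nonnegativity of the square
  have i2' := i2.const_mul (2 * μ)
  have i2'' := i2.const_mul (2 : ℝ)
  have i3' := i3.const_mul (μ ^ 2)
  have i3'' := i3.const_mul (((k : ℝ) + 1))
  have i12 : MeasureTheory.IntegrableOn
      (fun r => deriv φ r ^ 2 * Real.sin r ^ (k + 2)
        - (2 * μ) * (φ r * deriv φ r * Real.cos r * Real.sin r ^ (k + 1)))
      (Set.Ioo 0 Real.pi) := i1.sub i2'
  have i34 : MeasureTheory.IntegrableOn
      (fun r => ((k : ℝ) + 1) * (φ r ^ 2 * Real.cos r ^ 2 * Real.sin r ^ k)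
        - φ r ^ 2 * Real.sin r ^ (k + 2)) (Set.Ioo 0 Real.pi) := i3''.sub i4
  have S1 : 0 ≤ A - 2 * μ * B + μ ^ 2 * C := by
    have h0 : 0 ≤ ∫ r in Set.Ioo 0 Real.pi,
        (deriv φ r * Real.sin r - μ * φ r * Real.cos r) ^ 2 * Real.sin r ^ k := by
      apply MeasureTheory.setIntegral_nonneg measurableSet_Ioo
      intro r hr
      have : 0 ≤ Real.sin r := Real.sin_nonneg_of_nonneg_of_le_pi hr.1.le hr.2.le
      positivity
    have heq : (fun r => (deriv φ r * Real.sin r - μ * φ r * Real.cos r) ^ 2 * Real.sin r ^ k)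
        = fun r => (deriv φ r ^ 2 * Real.sin r ^ (k + 2)
          - (2 * μ) * (φ r * deriv φ r * Real.cos r * Real.sin r ^ (k + 1)))
          + μ ^ 2 * (φ r ^ 2 * Real.cos r ^ 2 * Real.sin r ^ k) := by
      funext r; ring
    rw [heq, MeasureTheory.integral_add i12 i3', MeasureTheory.integral_sub i1 i2',
      MeasureTheory.integral_const_mul, MeasureTheory.integral_const_mul] at h0
    linarith
  -- integration by parts
  have hF : ∀ r, HasDerivAt (fun x => φ x ^ 2 * (Real.cos x * Real.sin x ^ (k + 1)))
      ((2 * φ r * deriv φ r) * (Real.cos r * Real.sin r ^ (k + 1))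
        + φ r ^ 2 * ((-Real.sin r) * Real.sin r ^ (k + 1)
          + Real.cos r * (((k : ℝ) + 1) * Real.sin r ^ k * Real.cos r))) r := by
    intro r
    have hφr : HasDerivAt φ (deriv φ r) r := (hφ.differentiable (by simp) r).hasDerivAt
    have h1 : HasDerivAt (fun x => φ x ^ 2) (2 * φ r * deriv φ r) r := by
      simpa using hφr.fun_pow 2
    have h2 : HasDerivAt (fun x => Real.sin x ^ (k + 1))
        (((k : ℝ) + 1) * Real.sin r ^ k * Real.cos r) r := by
      simpa using (Real.hasDerivAt_sin r).fun_pow (k + 1)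
    exact h1.mul ((Real.hasDerivAt_cos r).mul h2)
  have hGc : Continuous (fun r => (2 * φ r * deriv φ r) * (Real.cos r * Real.sin r ^ (k + 1))
        + φ r ^ 2 * ((-Real.sin r) * Real.sin r ^ (k + 1)
          + Real.cos r * (((k : ℝ) + 1) * Real.sin r ^ k * Real.cos r))) := by
    apply Continuous.add
    · exact ((continuous_const.mul hφc).mul hφ').mul
        (Real.continuous_cos.mul (Real.continuous_sin.pow _))
    · exact (hφc.pow 2).mul ((Real.continuous_sin.neg.mul (Real.continuous_sin.pow _)).add
        (Real.continuous_cos.mul ((continuous_const.mul (Real.continuous_sin.pow _)).mul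
          Real.continuous_cos)))
  have hdF : deriv (fun x => φ x ^ 2 * (Real.cos x * Real.sin x ^ (k + 1)))
      = fun r => (2 * φ r * deriv φ r) * (Real.cos r * Real.sin r ^ (k + 1))
        + φ r ^ 2 * ((-Real.sin r) * Real.sin r ^ (k + 1)
          + Real.cos r * (((k : ℝ) + 1) * Real.sin r ^ k * Real.cos r)) :=
    funext fun r => (hF r).deriv
  have hφ0 : φ 0 = 0 := by
    apply image_eq_zero_of_notMem_tsupport
    intro h; exact absurd (hsupp h).1 (lt_irrefl 0)
  have hφπ : φ Real.pi = 0 := by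
    apply image_eq_zero_of_notMem_tsupport
    intro h; exact absurd (hsupp h).2 (lt_irrefl Real.pi)
  have hzero : ∫ r in Set.Ioo 0 Real.pi,
      ((2 * φ r * deriv φ r) * (Real.cos r * Real.sin r ^ (k + 1))
        + φ r ^ 2 * ((-Real.sin r) * Real.sin r ^ (k + 1)
          + Real.cos r * (((k : ℝ) + 1) * Real.sin r ^ k * Real.cos r))) = 0 := by
    have h1 : ∫ r in (0:ℝ)..Real.pi, deriv (fun x => φ x ^ 2 * (Real.cos x * Real.sin x ^ (k + 1))) r
        = φ Real.pi ^ 2 * (Real.cos Real.pi * Real.sin Real.pi ^ (k + 1))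
          - φ 0 ^ 2 * (Real.cos 0 * Real.sin 0 ^ (k + 1)) :=
      intervalIntegral.integral_deriv_eq_sub (fun x _ => (hF x).differentiableAt)
        (by rw [hdF]; exact hGc.intervalIntegrable 0 Real.pi)
    rw [hdF, intervalIntegral.integral_of_le Real.pi_pos.le,
      MeasureTheory.integral_Ioc_eq_integral_Ioo, hφ0, hφπ] at h1
    simpa using h1
  have S2 : 2 * B + (((k : ℝ) + 1) * C - D) = 0 := by
    have heq : (fun r => (2 * φ r * deriv φ r) * (Real.cos r * Real.sin r ^ (k + 1))
        + φ r ^ 2 * ((-Real.sin r) * Real.sin r ^ (k + 1)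
          + Real.cos r * (((k : ℝ) + 1) * Real.sin r ^ k * Real.cos r)))
        = fun r => (2 : ℝ) * (φ r * deriv φ r * Real.cos r * Real.sin r ^ (k + 1))
          + (((k : ℝ) + 1) * (φ r ^ 2 * Real.cos r ^ 2 * Real.sin r ^ k)
            - φ r ^ 2 * Real.sin r ^ (k + 2)) := by
      funext r; ring
    rw [heq, MeasureTheory.integral_add i2'' i34, MeasureTheory.integral_sub i3'' i4,
      MeasureTheory.integral_const_mul, MeasureTheory.integral_const_mul] at hzero
    linarith
  -- cos² = 1 - sin²
  have S3 : C = E - D := by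
    have heq : (fun r => φ r ^ 2 * Real.cos r ^ 2 * Real.sin r ^ k)
        = fun r => φ r ^ 2 * Real.sin r ^ k - φ r ^ 2 * Real.sin r ^ (k + 2) := by
      funext r
      linear_combination (φ r ^ 2 * Real.sin r ^ k) * (Real.sin_sq_add_cos_sq r)
    rw [hC, heq, MeasureTheory.integral_sub i5 i4]
  have S2' : μ * (2 * B + (((k : ℝ) + 1) * C - D)) = 0 := by rw [S2, mul_zero]
  have S4' : (μ ^ 2 + ((k : ℝ) + 1) * μ) * C = lam * C := by rw [S4]
  have S3' : lam * C = lam * E - lam * D := by rw [S3]; ring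
  nlinarith [S1, S2', S4', S3']
end

section
/- For every c > 1 there exists N such that for all n ≥ N, setting λ = 2n - c and G = (n+1)²λ²/(2n²(n+3)), the determinant of the matrix [[G, (n+1)λ], [(n+1)λ, 2n²(n+3)]] is negative, i.e. G · 2n²(n+3) < (n+1)²λ². -/
open Filter Topology

/-!
Write `λ = 2n - c`. The determinant factors as `(n - 1) λ (λ - n)` times
`n (λ - 2(n - 1)) d - 4 (n - 1) λ (λ - n)`, where `d` is the `(2,2)`-entry. The first factor is
positive once `n > c`. Divided by `n³`, the second is a rational function of `x = 1/n`,
continuous at `0` with value `8(1 - c) < 0` there, so it is negative for all large `n`.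
-/

noncomputable def reducedDet (c x : ℝ) : ℝ :=
  (2 - c) * (2 * (2 - c * x) ^ 2 + 8 * x * (2 - c * x)
      - x * (1 + x) ^ 2 * (2 - c * x) ^ 2 / ((1 + x) * (2 - c * x) - 2 * x * (1 - x))
      - x * (1 + x) ^ 2 * (2 - c * x) ^ 2 / (2 * (1 + 3 * x)))
    - 4 * (1 - x) * (2 - c * x) * (1 - c * x)

theorem det_Q₁_eq (n lam d : ℝ) :
    !![n * (n - 1) * lam * (lam - n) * (lam - 2 * (n - 1)), -2 * (n - 1) * lam * (lam - n);
      -2 * (n - 1) * lam * (lam - n), d].det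
      = (n - 1) * lam * (lam - n) * (n * (lam - 2 * (n - 1)) * d - 4 * (n - 1) * lam * (lam - n)) := by
  rw [Matrix.det_fin_two_of]; ring

theorem reducedDet_zero (c : ℝ) : reducedDet c 0 = 8 * (1 - c) := by
  norm_num [reducedDet]; ring

theorem continuousAt_reducedDet (c : ℝ) : ContinuousAt (reducedDet c) 0 := by
  unfold reducedDet
  fun_prop (disch := norm_num)

theorem eventually_reducedDet_inv_neg {c : ℝ} (hc : 1 < c) :
    ∀ᶠ n : ℕ in atTop, reducedDet c (n : ℝ)⁻¹ < 0 := by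
  have hlim := (continuousAt_reducedDet c).tendsto.comp tendsto_inv_atTop_zero
  refine (hlim.comp tendsto_natCast_atTop_atTop).eventually_lt_const ?_
  rw [reducedDet_zero]; linarith

theorem det_Q₁_cofactor_eq_pow_three_mul {c n lam F G : ℝ} (hn : n ≠ 0) (hn3 : n + 3 ≠ 0)
    (hD : (n + 1) * lam - 2 * (n - 1) ≠ 0) (hlam : lam = 2 * n - c)
    (hF : F = (n + 1) ^ 2 * lam ^ 2 / (n * ((n + 1) * lam - 2 * (n - 1))))
    (hG : G = (n + 1) ^ 2 * lam ^ 2 / (2 * n ^ 2 * (n + 3))) :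
    n * (lam - 2 * (n - 1)) * ((2 * n + 6) * lam + 2 * lam * (lam - (n - 1)) - F - G)
      - 4 * (n - 1) * lam * (lam - n) = n ^ 3 * reducedDet c n⁻¹ := by
  subst hlam hF hG
  have h1 : (1 + n⁻¹) * (2 - c * n⁻¹) - 2 * n⁻¹ * (1 - n⁻¹) ≠ 0 := by
    contrapose! hD
    field_simp at hD
    linear_combination hD
  have h2 : 1 + 3 * n⁻¹ ≠ 0 := by
    contrapose! hn3
    field_simp at hn3
    linear_combination hn3
  unfold reducedDet
  field_simp
  ring

theorem stmt_17 (c : ℝ) (hc : 1 < c) :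
    ∃ N : ℕ, ∀ n : ℕ, N ≤ n → ∀ lam F G : ℝ,
      lam = 2 * (n : ℝ) - c →
      F = ((n : ℝ) + 1) ^ 2 * lam ^ 2 /
          ((n : ℝ) * (((n : ℝ) + 1) * lam - 2 * ((n : ℝ) - 1))) →
      G = ((n : ℝ) + 1) ^ 2 * lam ^ 2 / (2 * (n : ℝ) ^ 2 * ((n : ℝ) + 3)) →
      (!![(n : ℝ) * ((n : ℝ) - 1) * lam * (lam - (n : ℝ)) * (lam - 2 * ((n : ℝ) - 1)),
            -2 * ((n : ℝ) - 1) * lam * (lam - (n : ℝ));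
          -2 * ((n : ℝ) - 1) * lam * (lam - (n : ℝ)),
            (2 * (n : ℝ) + 6) * lam + 2 * lam * (lam - ((n : ℝ) - 1)) - F - G]).det < 0 := by
  obtain ⟨N, hN⟩ := eventually_atTop.mp
    ((eventually_reducedDet_inv_neg hc).and (tendsto_natCast_atTop_atTop.eventually_gt_atTop c))
  refine ⟨N, fun n hn lam F G hlam hF hG => ?_⟩
  obtain ⟨hred, hcn⟩ := hN n hn
  have hn1 : (1 : ℝ) < n := hc.trans hcn
  have hD : ((n : ℝ) + 1) * lam - 2 * (n - 1) ≠ 0 := by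
    rw [hlam]; nlinarith
  rw [det_Q₁_eq, det_Q₁_cofactor_eq_pow_three_mul (by positivity) (by positivity) hD hlam hF hG]
  have hfactor : 0 < ((n : ℝ) - 1) * lam * (lam - n) := by
    rw [hlam]; exact mul_pos (mul_pos (by linarith) (by linarith)) (by linarith)
  exact mul_neg_of_pos_of_neg hfactor (mul_neg_of_pos_of_neg (by positivity) hred)
end

section
/- Let n ≥ 4 and λ > 0 with n < λ < 2n - (n/2)(√(1+8/n) - 1), and set μ = -(n-1)/2 + √((n-1)²/4 + λ) and λ̃ = λ + μ. Then n + 1 < λ̃ < 2n, and consequently n(λ̃ - n - 1)(λ̃ - 2n)(λ̃ - n) < 0. -/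
/-!
`μ` is the positive root of `x² + (n-1)x - λ`, so comparing a point `x ≥ -(n-1)/2` with `μ`
amounts to comparing `x² + (n-1)x` with `λ`. At `x = 1` this gives `μ > 1` from `λ > n`, i.e.
`λ̃ > n + 1`. At `x = t := 2n - λ` it gives `μ < t`, i.e. `λ̃ < 2n`, as soon as `t² + n t > 2n`;
this holds because `(n/2)(√(1 + 8/n) - 1)` is the positive root of `t² + n t - 2n`.
-/

namespace Real

variable {b c x : ℝ}

lemma neg_half_add_sqrt_lt_iff (hx : -b / 2 < x) :
    -b / 2 + √(b ^ 2 / 4 + c) < x ↔ c < x ^ 2 + b * x := by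
  rw [← lt_sub_iff_add_lt', sqrt_lt' (by linarith),
    show (x - -b / 2) ^ 2 = x ^ 2 + b * x + b ^ 2 / 4 by ring]
  constructor <;> intro h <;> linarith

lemma lt_neg_half_add_sqrt_iff (hx : -b / 2 ≤ x) :
    x < -b / 2 + √(b ^ 2 / 4 + c) ↔ x ^ 2 + b * x < c := by
  rw [← sub_lt_iff_lt_add', lt_sqrt (by linarith),
    show (x - -b / 2) ^ 2 = x ^ 2 + b * x + b ^ 2 / 4 by ring]
  constructor <;> intro h <;> linarith

lemma half_mul_sqrt_one_add_eight_div_sub_one {N : ℝ} (hN : 0 < N) :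
    N / 2 * (√(1 + 8 / N) - 1) = -N / 2 + √(N ^ 2 / 4 + 2 * N) := by
  have h : N ^ 2 / 4 + 2 * N = (N / 2) ^ 2 * (1 + 8 / N) := by field_simp; ring
  rw [h, sqrt_mul (sq_nonneg _), sqrt_sq (by positivity)]
  ring

lemma half_mul_sqrt_one_add_eight_div_sub_one_nonneg {N : ℝ} (hN : 0 ≤ N) :
    0 ≤ N / 2 * (√(1 + 8 / N) - 1) :=
  mul_nonneg (by positivity) (sub_nonneg.2 (one_le_sqrt.2 (by simp; positivity)))

end Real

open Real

section ShiftedEigenvalue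

variable {N lam : ℝ}

lemma one_lt_neg_half_add_sqrt (hN : -1 ≤ N) (h : N < lam) :
    1 < -(N - 1) / 2 + √((N - 1) ^ 2 / 4 + lam) := by
  rw [lt_neg_half_add_sqrt_iff (by linarith)]
  linarith

lemma neg_half_add_sqrt_lt_two_mul_sub (hN : 1 ≤ N)
    (h : lam < 2 * N - N / 2 * (√(1 + 8 / N) - 1)) :
    -(N - 1) / 2 + √((N - 1) ^ 2 / 4 + lam) < 2 * N - lam := by
  have hroot_nonneg := half_mul_sqrt_one_add_eight_div_sub_one_nonneg (N := N) (by linarith)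
  have ht : 2 * N < (2 * N - lam) ^ 2 + N * (2 * N - lam) := by
    rw [← neg_half_add_sqrt_lt_iff (by linarith),
      ← half_mul_sqrt_one_add_eight_div_sub_one (by linarith)]
    linarith
  rw [neg_half_add_sqrt_lt_iff (by linarith)]
  linear_combination ht

end ShiftedEigenvalue

lemma mul_sub_mul_sub_mul_sub_neg {N x : ℝ} (hN : 0 < N) (hlow : N + 1 < x) (hhigh : x < 2 * N) :
    N * (x - N - 1) * (x - 2 * N) * (x - N) < 0 :=
  mul_neg_of_neg_of_pos
    (mul_neg_of_pos_of_neg (mul_pos hN (by linarith)) (by linarith)) (by linarith)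

theorem stmt_19_general (n : ℕ) (lam : ℝ) (h1 : (n : ℝ) < lam)
    (h2 : lam < 2 * (n : ℝ) - ((n : ℝ) / 2) * (Real.sqrt (1 + 8 / (n : ℝ)) - 1))
    (μ lamt : ℝ)
    (hμ : μ = -((n : ℝ) - 1) / 2 + Real.sqrt (((n : ℝ) - 1) ^ 2 / 4 + lam))
    (hlt : lamt = lam + μ) :
    ((n : ℝ) + 1 < lamt ∧ lamt < 2 * (n : ℝ)) ∧
    (n : ℝ) * (lamt - (n : ℝ) - 1) * (lamt - 2 * (n : ℝ)) * (lamt - (n : ℝ)) < 0 := by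
  have hroot_nonneg := half_mul_sqrt_one_add_eight_div_sub_one_nonneg (Nat.cast_nonneg' n)
  -- `n < λ < 2n` rules out `n = 0`.
  have hn : (1 : ℝ) ≤ n := Nat.one_le_cast.2 (by exact_mod_cast (by linarith : (0 : ℝ) < n))
  have hbounds : (n : ℝ) + 1 < lamt ∧ lamt < 2 * (n : ℝ) := by
    subst hlt hμ
    constructor
    · linarith [one_lt_neg_half_add_sqrt (by linarith) h1]
    · linarith [neg_half_add_sqrt_lt_two_mul_sub hn h2]
  exact ⟨hbounds, mul_sub_mul_sub_mul_sub_neg (by linarith) hbounds.1 hbounds.2⟩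

theorem stmt_19 (n : ℕ) (hn : 4 ≤ n) (lam : ℝ) (h1 : (n : ℝ) < lam)
    (h2 : lam < 2 * (n : ℝ) - ((n : ℝ) / 2) * (Real.sqrt (1 + 8 / (n : ℝ)) - 1))
    (μ lamt : ℝ)
    (hμ : μ = -((n : ℝ) - 1) / 2 + Real.sqrt (((n : ℝ) - 1) ^ 2 / 4 + lam))
    (hlt : lamt = lam + μ) :
    ((n : ℝ) + 1 < lamt ∧ lamt < 2 * (n : ℝ)) ∧
    (n : ℝ) * (lamt - (n : ℝ) - 1) * (lamt - 2 * (n : ℝ)) * (lamt - (n : ℝ)) < 0 :=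
  stmt_19_general n lam h1 h2 μ lamt hμ hlt
end
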